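/- Let K be a TOMKS in {0,1}^n whose set of minimal covers is exactly { {1,…,q} \ {p} } ∪ { {1,…,p} ∪ {j} : j = p+1,…,q }, where 1 ≤ p ≤ q − 2 and q ≤ n, and let πᵀx ≤ 1 be a non-trivial facet-defining inequality for the convex hull of K. If π_p > 0, then Σ_{i=1}^p π_i = 1. -/

import Mathlib

open Finset

/-- `S₁` dominates `S₂`: there is an injection `f : S₂ → S₁` with `f i ≤ i`. -/
def Dominates {n : ℕ} (S₁ S₂ : Finset (Fin n)) : Prop :=
  ∃ f : Fin n → Fin n, Set.InjOn f (S₂ : Set (Fin n)) ∧ ∀ i ∈ S₂, f i ∈ S₁ ∧ f i ≤ i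

/-- Columns of `A` are componentwise non-increasing. -/
def ColsOrdered {m n : ℕ} (A : Fin m → Fin n → ℕ) : Prop :=
  ∀ j : Fin m, ∀ i i' : Fin n, i ≤ i' → A j i' ≤ A j i

/-- `S` is a cover for the multiple knapsack set given by `A, b`. -/
def IsCover {m n : ℕ} (A : Fin m → Fin n → ℕ) (b : Fin m → ℕ) (S : Finset (Fin n)) : Prop :=
  ∃ j : Fin m, b j < ∑ i ∈ S, A j i

/-- Minimal cover: a cover none of whose proper subsets is a cover. -/
def IsMinimalCover {m n : ℕ} (A : Fin m → Fin n → ℕ) (b : Fin m → ℕ)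
    (S : Finset (Fin n)) : Prop :=
  IsCover A b S ∧ ∀ S' ⊂ S, ¬ IsCover A b S'

/-- The union `C = ∪ₕ Cₕ`. -/
def unionC {n k : ℕ} (C : Fin k → Finset (Fin n)) : Finset (Fin n) :=
  Finset.univ.sup C

/-- The intersection `C₀ = ∩ₕ Cₕ`. -/
def interC {n k : ℕ} (C : Fin k → Finset (Fin n)) : Finset (Fin n) :=
  Finset.univ.inf C

/-- `{C₁,…,C_k}` is a multi-cover for the TOMKS given by `A, b`. -/
def MultiCover {m n k : ℕ} (A : Fin m → Fin n → ℕ) (b : Fin m → ℕ)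
    (C : Fin k → Finset (Fin n)) : Prop :=
  (∀ h, IsCover A b (C h)) ∧
  ∀ T ⊆ unionC C \ interC C, (∀ h, T ≠ C h \ interC C) →
    ∃ h, Dominates T (C h \ interC C) ∨ Dominates (C h \ interC C) T

/-- Max of `g` over `S`, with the empty maximum taken to be `0`. -/
def fmax {ι : Type*} (S : Finset ι) (g : ι → ℤ) : ℤ :=
  if h : S.Nonempty then S.sup' h g else 0

/-- Min of `g` over `S`, with the empty minimum taken to be `0`. -/
def fmin {ι : Type*} (S : Finset ι) (g : ι → ℤ) : ℤ :=
  if h : S.Nonempty then S.inf' h g else 0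

/-- `α` is an MCI coefficient vector for the family of covers `C`. -/
def IsMCICoeff {n k : ℕ} (C : Fin k → Finset (Fin n)) (α : Fin n → ℤ) : Prop :=
  (∀ i, i ∉ unionC C → α i = 0) ∧
  (∀ i ∈ unionC C \ interC C, (∀ j ∈ unionC C \ interC C, j ≤ i) → α i = 1) ∧
  (∀ i ∈ unionC C \ interC C, (∃ j ∈ unionC C \ interC C, i < j) →
    ∀ h : Fin k, i ∈ C h →
      1 + fmax ((unionC C \ C h).filter (fun ℓ => i < ℓ)) α ≤ α i) ∧
  (∀ j ∈ interC C, ∃ h : Fin k,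
    max (fmax ((unionC C \ C h).filter (fun ℓ => ℓ < j)) α)
        (1 + ∑ ℓ ∈ (unionC C \ C h).filter (fun ℓ => j < ℓ), α ℓ) ≤ α j)

/-- `α` is the S-MCI coefficient vector for the family of covers `C`. -/
def IsSMCICoeff {n k : ℕ} (C : Fin k → Finset (Fin n)) (α : Fin n → ℤ) : Prop :=
  (∀ i, i ∉ unionC C → α i = 0) ∧
  (∀ i ∈ unionC C \ interC C,
    α i = 1 + fmax (Finset.univ.filter (fun h : Fin k => i ∈ C h))
        (fun h => fmax ((unionC C \ C h).filter (fun ℓ => i < ℓ)) α)) ∧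
  (∀ j ∈ interC C,
    α j = fmin (Finset.univ : Finset (Fin k))
        (fun h => max (fmax ((unionC C \ C h).filter (fun ℓ => ℓ < j)) α)
            (1 + ∑ ℓ ∈ (unionC C \ C h).filter (fun ℓ => j < ℓ), α ℓ)))

/-- Second-smallest value of the multiset `{α i : i ∈ D}` (for `|D| ≥ 2`). -/
def secondMin {n : ℕ} (α : Fin n → ℤ) (D : Finset (Fin n)) : ℤ :=
  fmax D (fun j => fmin (D.erase j) α)

/-- `πᵀ x ≤ 1` is a non-trivial facet-defining inequality for `conv(K)`. -/
def IsNontrivialFacet {m n : ℕ} (A : Fin m → Fin n → ℕ) (b : Fin m → ℕ)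
    (pv : Fin n → ℝ) : Prop :=
  (∀ i, 0 ≤ pv i) ∧
  (∃ i j : Fin n, i ≠ j ∧ pv i ≠ 0 ∧ pv j ≠ 0) ∧
  (∀ x : Fin n → ℝ, (∀ i, x i = 0 ∨ x i = 1) →
    (∀ j, ∑ i, (A j i : ℝ) * x i ≤ (b j : ℝ)) → ∑ i, pv i * x i ≤ 1) ∧
  (∃ pts : Fin n → (Fin n → ℝ), AffineIndependent ℝ pts ∧
    ∀ ℓ, (∀ i, pts ℓ i = 0 ∨ pts ℓ i = 1) ∧
      (∀ j, ∑ i, (A j i : ℝ) * pts ℓ i ≤ (b j : ℝ)) ∧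
      ∑ i, pv i * pts ℓ i = 1)

/-- `S` is a cover for the single knapsack set given by `a, b`. -/
def IsCoverK {n : ℕ} (a : Fin n → ℕ) (b : ℕ) (S : Finset (Fin n)) : Prop :=
  b < ∑ i ∈ S, a i

/-- Minimal cover for a single knapsack set. -/
def IsMinimalCoverK {n : ℕ} (a : Fin n → ℕ) (b : ℕ) (S : Finset (Fin n)) : Prop :=
  IsCoverK a b S ∧ ∀ S' ⊂ S, ¬ IsCoverK a b S'

lemma hyperplane_aux {n : ℕ} (pts : Fin n → (Fin n → ℝ)) (haff : AffineIndependent ℝ pts)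
    (pv g : Fin n → ℝ)
    (h1 : ∀ ℓ, ∑ i, pv i * pts ℓ i = 1)
    (h2 : ∀ ℓ, ∑ i, g i * pts ℓ i = 0) :
    ∀ i, g i = 0 := by
  classical
  match n, pts, pv, g, haff, h1, h2 with
  | 0, pts, pv, g, haff, h1, h2 => exact fun i => i.elim0
  | (n'+1), pts, pv, g, haff, h1, h2 =>
  set Pl : (Fin (n'+1) → ℝ) →ₗ[ℝ] ℝ := ∑ i, pv i • (LinearMap.proj i) with hPldef
  set Gl : (Fin (n'+1) → ℝ) →ₗ[ℝ] ℝ := ∑ i, g i • (LinearMap.proj i) with hGldef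
  have hPl : ∀ x, Pl x = ∑ i, pv i * x i := by
    intro x; simp [hPldef]
  have hGl : ∀ x, Gl x = ∑ i, g i * x i := by
    intro x; simp [hGldef]
  set v : Fin n' → (Fin (n'+1) → ℝ) := fun k => pts k.succ - pts 0 with hv
  have liv : LinearIndependent ℝ v := by
    have li := (affineIndependent_iff_linearIndependent_vsub ℝ pts 0).mp haff
    have hinj : Function.Injective (fun k : Fin n' => (⟨k.succ, Fin.succ_ne_zero k⟩ : {x : Fin (n'+1) // x ≠ 0})) := by
      intro a b hab
      simpa [Fin.succ_inj] using Subtype.ext_iff.mp hab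
    have := li.comp _ hinj
    exact this
  have hnotmem : pts 0 ∉ Submodule.span ℝ (Set.range v) := by
    intro hmem
    have hker : Submodule.span ℝ (Set.range v) ≤ LinearMap.ker Pl := by
      rw [Submodule.span_le]
      rintro x ⟨k, rfl⟩
      simp only [SetLike.mem_coe, LinearMap.mem_ker, hv]
      rw [map_sub]
      have e1 : Pl (pts k.succ) = 1 := by rw [hPl]; exact h1 _
      have e2 : Pl (pts 0) = 1 := by rw [hPl]; exact h1 _
      rw [e1, e2]; ring
    have : Pl (pts 0) = 0 := hker hmem
    rw [hPl, h1] at this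
    exact one_ne_zero this
  have liu : LinearIndependent ℝ (Fin.cons (pts 0) v : Fin (n'+1) → (Fin (n'+1) → ℝ)) :=
    linearIndependent_fin_cons.mpr ⟨liv, hnotmem⟩
  have hsp : Submodule.span ℝ (Set.range (Fin.cons (pts 0) v : Fin (n'+1) → (Fin (n'+1) → ℝ))) = ⊤ :=
    liu.span_eq_top_of_card_eq_finrank (by simp)
  have hGzero : ∀ x, Gl x = 0 := by
    have hle : Submodule.span ℝ (Set.range (Fin.cons (pts 0) v : Fin (n'+1) → (Fin (n'+1) → ℝ))) ≤ LinearMap.ker Gl := by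
      rw [Submodule.span_le]
      rintro x ⟨k, rfl⟩
      induction k using Fin.cases with
      | zero =>
        simp only [SetLike.mem_coe, LinearMap.mem_ker, Fin.cons_zero]
        rw [hGl]; exact h2 _
      | succ k =>
        simp only [SetLike.mem_coe, LinearMap.mem_ker, Fin.cons_succ, hv]
        rw [map_sub]
        have e1 : Gl (pts k.succ) = 0 := by rw [hGl]; exact h2 _
        have e2 : Gl (pts 0) = 0 := by rw [hGl]; exact h2 _
        rw [e1, e2]; ring
    intro x
    have : x ∈ LinearMap.ker Gl := hle (hsp ▸ Submodule.mem_top)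
    exact this
  intro i
  have := hGzero (Pi.single i 1)
  rw [hGl] at this
  rw [Finset.sum_eq_single i] at this
  · simpa using this
  · intro j _ hj; simp [Pi.single_apply, hj]
  · intro h; exact absurd (Finset.mem_univ i) h

lemma cover_mono {m n : ℕ} {A : Fin m → Fin n → ℕ} {b : Fin m → ℕ}
    {S T : Finset (Fin n)} (hST : S ⊆ T) (h : IsCover A b S) : IsCover A b T := by
  obtain ⟨j, hj⟩ := h
  exact ⟨j, hj.trans_le (Finset.sum_le_sum_of_subset hST)⟩

lemma exists_minimal_cover {m n : ℕ} {A : Fin m → Fin n → ℕ} {b : Fin m → ℕ}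
    {S : Finset (Fin n)} (h : IsCover A b S) :
    ∃ T, T ⊆ S ∧ IsMinimalCover A b T := by
  classical
  induction S using Finset.strongInductionOn with
  | _ S ih =>
    by_cases hx : ∀ S' ⊂ S, ¬ IsCover A b S'
    · exact ⟨S, subset_rfl, h, hx⟩
    · push_neg at hx
      obtain ⟨S', hsub, hc⟩ := hx
      obtain ⟨T, hT, hTmin⟩ := ih S' hsub hc
      exact ⟨T, hT.trans hsub.subset, hTmin⟩

/-- Claim 3: for a non-trivial facet-defining inequality `πᵀx ≤ 1` of the
convex hull of a TOMKS with the given minimal cover set, if `π_p > 0` then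
`Σ_{i=1}^p π_i = 1`. -/
theorem facet_claim3 {m n : ℕ} (A : Fin m → Fin n → ℕ) (b : Fin m → ℕ)
    (hA : ColsOrdered A) (p q : ℕ) (hp : 1 ≤ p) (hpq : p + 2 ≤ q) (hq : q ≤ n)
    (hmin : ∀ S : Finset (Fin n), IsMinimalCover A b S ↔
      (S = Finset.univ.filter (fun i : Fin n => (i : ℕ) + 1 ≤ q ∧ (i : ℕ) + 1 ≠ p) ∨
       ∃ i₀ : Fin n, p < (i₀ : ℕ) + 1 ∧ (i₀ : ℕ) + 1 ≤ q ∧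
         S = Finset.univ.filter (fun i : Fin n => (i : ℕ) + 1 ≤ p ∨ i = i₀)))
    (pv : Fin n → ℝ) (hpv : IsNontrivialFacet A b pv)
    (hpos : ∀ i : Fin n, (i : ℕ) + 1 = p → 0 < pv i) :
    ∑ i ∈ Finset.univ.filter (fun i : Fin n => (i : ℕ) + 1 ≤ p), pv i = 1 := by
  classical
  obtain ⟨hnn, hnt, hvalid, pts, haff, hpts⟩ := hpv
  have hn0 : 0 < n := by omega
  set ip : Fin n := ⟨p - 1, by omega⟩ with hipdef
  have hip1 : (ip : ℕ) + 1 = p := by simp [hipdef]; omega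
  have hpip : 0 < pv ip := hpos ip hip1
  set Pset : Finset (Fin n) := univ.filter (fun i : Fin n => (i : ℕ) + 1 ≤ p) with hPdef
  set MC0 : Finset (Fin n) :=
    univ.filter (fun i : Fin n => (i : ℕ) + 1 ≤ q ∧ (i : ℕ) + 1 ≠ p) with hMC0def
  set Sl : Fin n → Finset (Fin n) := fun ℓ => univ.filter (fun i => pts ℓ i = 1) with hSldef
  -- sum conversion
  have hsum : ∀ (f : Fin n → ℝ) (ℓ : Fin n), ∑ i, f i * pts ℓ i = ∑ i ∈ Sl ℓ, f i := by
    intro f ℓ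
    rw [hSldef, Finset.sum_filter]
    apply Finset.sum_congr rfl
    intro i _
    rcases (hpts ℓ).1 i with h | h <;> simp [h]
  have htight : ∀ ℓ, ∑ i ∈ Sl ℓ, pv i = 1 := by
    intro ℓ; rw [← hsum]; exact (hpts ℓ).2.2
  -- tight supports are not covers
  have hfeasl : ∀ ℓ, ¬ IsCover A b (Sl ℓ) := by
    intro ℓ hc
    obtain ⟨j, hj⟩ := hc
    have h2 := (hpts ℓ).2.1 j
    rw [hsum (fun i => (A j i : ℝ)) ℓ] at h2
    rw [← Nat.cast_sum] at h2
    exact absurd (Nat.cast_le.mp h2) (not_le.mpr hj)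
  -- validity for feasible finsets
  have hvalf : ∀ S : Finset (Fin n), ¬ IsCover A b S → ∑ i ∈ S, pv i ≤ 1 := by
    intro S hS
    have hx : ∀ i, (if i ∈ S then (1:ℝ) else 0) = 0 ∨ (if i ∈ S then (1:ℝ) else 0) = 1 := by
      intro i; by_cases h : i ∈ S <;> simp [h]
    have hsum' : ∀ f : Fin n → ℝ, ∑ i, f i * (if i ∈ S then (1:ℝ) else 0) = ∑ i ∈ S, f i := by
      intro f
      rw [Finset.sum_congr rfl (g := fun i => if i ∈ S then f i else 0)
        (fun i _ => by by_cases h : i ∈ S <;> simp [h])]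
      simp [Finset.sum_ite_mem]
    have hAx : ∀ j, ∑ i, (A j i : ℝ) * (if i ∈ S then (1:ℝ) else 0) ≤ (b j : ℝ) := by
      intro j
      rw [hsum' (fun i => (A j i : ℝ)), ← Nat.cast_sum]
      exact_mod_cast not_lt.mp (fun h => hS ⟨j, h⟩)
    have := hvalid _ hx hAx
    rwa [hsum' pv] at this
  -- feasibility criterion via minimal covers
  have hfeas_of : ∀ S : Finset (Fin n),
      (¬ MC0 ⊆ S) →
      (∀ i₀ : Fin n, p < (i₀ : ℕ) + 1 → (i₀ : ℕ) + 1 ≤ q →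
        ¬ (univ.filter (fun i : Fin n => (i : ℕ) + 1 ≤ p ∨ i = i₀) ⊆ S)) →
      ¬ IsCover A b S := by
    intro S h1 h2 hc
    obtain ⟨T, hTS, hTmin⟩ := exists_minimal_cover hc
    rcases (hmin T).mp hTmin with rfl | ⟨i₀, hi₀1, hi₀2, rfl⟩
    · exact h1 hTS
    · exact h2 i₀ hi₀1 hi₀2 hTS
  -- cover detection
  have hcov_of : ∀ (S : Finset (Fin n)) (i₀ : Fin n), p < (i₀ : ℕ) + 1 → (i₀ : ℕ) + 1 ≤ q →
      (univ.filter (fun i : Fin n => (i : ℕ) + 1 ≤ p ∨ i = i₀)) ⊆ S → IsCover A b S := by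
    intro S i₀ h1 h2 hsub
    exact cover_mono hsub ((hmin _).mpr (Or.inr ⟨i₀, h1, h2, rfl⟩)).1
  -- hyperplane application
  have hyp : ∀ (h : Fin n → ℝ) (c : ℝ), (∀ ℓ, ∑ i ∈ Sl ℓ, h i = c) → ∀ i, h i = c * pv i := by
    intro h c hc i
    have hg := hyperplane_aux pts haff pv (fun i => h i - c * pv i)
      (fun ℓ => (hpts ℓ).2.2) ?_ i
    · linarith [hg]
    · intro ℓ
      have : ∑ i, (h i - c * pv i) * pts ℓ i
          = (∑ i, h i * pts ℓ i) - c * ∑ i, pv i * pts ℓ i := by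
        rw [Finset.mul_sum, ← Finset.sum_sub_distrib]
        apply Finset.sum_congr rfl
        intro i _; ring
      rw [this, hsum h ℓ, hc ℓ, (hpts ℓ).2.2]
      ring
  -- every coordinate is 1 at some tight point
  have hexists1 : ∀ i : Fin n, ∃ ℓ, i ∈ Sl ℓ := by
    intro i
    by_contra hno
    push_neg at hno
    have := hyp (fun j => if j = i then 1 else 0) 0 ?_ i
    · simp at this
    · intro ℓ
      rw [Finset.sum_ite_eq' (Sl ℓ) i (fun _ => (1:ℝ))]
      simp [hno ℓ]
  -- pv vanishes above q
  have hstep0 : ∀ r : Fin n, q < (r : ℕ) + 1 → pv r = 0 := by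
    intro r hr
    by_cases hall : ∀ ℓ, r ∈ Sl ℓ
    · exfalso
      have h1 := hyp (fun j => if j = r then 1 else 0) 1 (fun ℓ => by
        rw [Finset.sum_ite_eq' (Sl ℓ) r (fun _ => (1:ℝ))]; simp [hall ℓ])
      obtain ⟨a, b', hab, ha, hb'⟩ := hnt
      have hav : ∀ j : Fin n, j ≠ r → pv j = 0 := by
        intro j hj
        have := h1 j
        simp only [if_neg hj, one_mul] at this
        linarith
      rcases eq_or_ne a r with rfl | har
      · exact hb' (hav b' (Ne.symm hab))
      · exact ha (hav a har)
    · push_neg at hall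
      obtain ⟨ℓ, hrl⟩ := hall
      have hfeas' : ¬ IsCover A b (insert r (Sl ℓ)) := by
        apply hfeas_of
        · intro hsub
          have hsub' : MC0 ⊆ Sl ℓ := by
            intro x hx
            rcases Finset.mem_insert.mp (hsub hx) with rfl | h
            · exfalso; rw [hMC0def] at hx; simp at hx; omega
            · exact h
          exact hfeasl ℓ (cover_mono hsub' ((hmin MC0).mpr (Or.inl rfl)).1)
        · intro i₀ h1 h2 hsub
          have hsub' : univ.filter (fun i : Fin n => (i:ℕ)+1 ≤ p ∨ i = i₀) ⊆ Sl ℓ := by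
            intro x hx
            rcases Finset.mem_insert.mp (hsub hx) with rfl | h
            · exfalso
              simp only [Finset.mem_filter, Finset.mem_univ, true_and] at hx
              rcases hx with hx | rfl <;> omega
            · exact h
          exact hfeasl ℓ (hcov_of _ i₀ h1 h2 hsub')
      have hle := hvalf _ hfeas'
      rw [Finset.sum_insert hrl, htight ℓ] at hle
      have := hnn r
      linarith
  -- easy direction: σ ≤ 1
  have hsplitmem : ∀ (S : Finset (Fin n)) (pr : Fin n → Prop) (_ : DecidablePred pr),
      ∑ i ∈ univ.filter pr, pv i
        = ∑ i ∈ S.filter pr, pv i + ∑ i ∈ univ.filter pr \ S, pv i := by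
    intro S pr hd
    rw [← Finset.sum_filter_add_sum_filter_not (univ.filter pr) (· ∈ S) pv]
    congr 1
    · apply Finset.sum_congr _ (fun _ _ => rfl)
      ext x; simp only [Finset.mem_filter, Finset.mem_univ, true_and]; tauto
    · apply Finset.sum_congr _ (fun _ _ => rfl)
      ext x
      simp only [Finset.mem_filter, Finset.mem_univ, true_and, Finset.mem_sdiff]
      try tauto
  have hsigle : ∑ i ∈ Pset, pv i ≤ 1 := by
    apply hvalf
    apply hfeas_of
    · intro hsub
      have hq1 : q - 1 < n := by omega
      have hm : (⟨q-1, hq1⟩ : Fin n) ∈ MC0 := by rw [hMC0def]; simp; omega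
      have := hsub hm
      rw [hPdef] at this; simp at this; omega
    · intro i₀ h1 h2 hsub
      have := hsub (show i₀ ∈ _ by simp)
      rw [hPdef] at this; simp at this; omega
  set σ : ℝ := ∑ i ∈ Pset, pv i with hσdef
  by_contra hne
  have hσlt : σ < 1 := lt_of_le_of_ne hsigle hne
  -- key splitting identity for tight points
  have hkey : ∀ ℓ, σ - (∑ i ∈ Pset \ Sl ℓ, pv i)
      + (∑ i ∈ (Sl ℓ).filter (fun i : Fin n => p < (i : ℕ) + 1 ∧ (i : ℕ) + 1 ≤ q), pv i) = 1 := by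
    intro ℓ
    have e0 := htight ℓ
    rw [← Finset.sum_filter_add_sum_filter_not (Sl ℓ) (fun i : Fin n => (i:ℕ)+1 ≤ p) pv,
      ← Finset.sum_filter_add_sum_filter_not
        ((Sl ℓ).filter (fun i : Fin n => ¬((i:ℕ)+1 ≤ p))) (fun i : Fin n => (i:ℕ)+1 ≤ q) pv]
      at e0
    have ez : ∑ i ∈ ((Sl ℓ).filter (fun i : Fin n => ¬((i:ℕ)+1 ≤ p))).filter
        (fun i : Fin n => ¬((i:ℕ)+1 ≤ q)), pv i = 0 :=
      Finset.sum_eq_zero (fun i hi => hstep0 i (by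
        simp only [Finset.mem_filter] at hi; omega))
    have eJ : ((Sl ℓ).filter (fun i : Fin n => ¬((i:ℕ)+1 ≤ p))).filter
        (fun i : Fin n => ((i:ℕ)+1 ≤ q))
        = (Sl ℓ).filter (fun i : Fin n => p < (i : ℕ) + 1 ∧ (i : ℕ) + 1 ≤ q) := by
      ext x
      simp only [Finset.mem_filter, and_assoc]
      constructor
      · rintro ⟨h1, h2, h3⟩; exact ⟨h1, by omega, h3⟩
      · rintro ⟨h1, h2, h3⟩; exact ⟨h1, by omega, h3⟩
    rw [eJ, ez] at e0
    have e3 := hsplitmem (Sl ℓ) (fun i : Fin n => (i:ℕ)+1 ≤ p) (by infer_instance)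
    rw [← hPdef, ← hσdef] at e3
    linarith
  -- I_S nonempty
  have hIne : ∀ ℓ : Fin n, (Pset \ Sl ℓ).Nonempty := by
    intro ℓ
    have hk := hkey ℓ
    have hI0 : 0 ≤ ∑ i ∈ Pset \ Sl ℓ, pv i := Finset.sum_nonneg (fun i _ => hnn i)
    have hJpos : 0 < ∑ i ∈ (Sl ℓ).filter
        (fun i : Fin n => p < (i:ℕ)+1 ∧ (i:ℕ)+1 ≤ q), pv i := by linarith
    have hJne : ((Sl ℓ).filter (fun i : Fin n => p < (i:ℕ)+1 ∧ (i:ℕ)+1 ≤ q)).Nonempty := by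
      rcases Finset.eq_empty_or_nonempty
        ((Sl ℓ).filter (fun i : Fin n => p < (i:ℕ)+1 ∧ (i:ℕ)+1 ≤ q)) with he | h
      · rw [he] at hJpos; simp at hJpos
      · exact h
    obtain ⟨j, hj⟩ := hJne
    simp only [Finset.mem_filter] at hj
    rw [Finset.sdiff_nonempty]
    intro hsub
    apply hfeasl ℓ
    apply hcov_of _ j hj.2.1 hj.2.2
    intro x hx
    simp only [Finset.mem_filter, Finset.mem_univ, true_and] at hx
    rcases hx with hx | rfl
    · exact hsub (by rw [hPdef]; simp; omega)
    · exact hj.1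
  -- p ≥ 2
  have hp2 : 2 ≤ p := by
    by_contra hlt
    obtain ⟨ℓ₀, hℓ₀⟩ := hexists1 ip
    obtain ⟨x, hx⟩ := hIne ℓ₀
    rw [Finset.mem_sdiff, hPdef] at hx
    simp only [Finset.mem_filter, Finset.mem_univ, true_and] at hx
    have hxip : x = ip := by
      apply Fin.ext
      simp only [hipdef]
      omega
    rw [hxip] at hx
    exact hx.2 hℓ₀
  -- the set [p-1] and its minimum
  set P'set : Finset (Fin n) := univ.filter (fun i : Fin n => (i:ℕ)+2 ≤ p) with hP'def
  have hP'ne : P'set.Nonempty := ⟨⟨0, hn0⟩, by rw [hP'def]; simp; omega⟩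
  set μ : ℝ := P'set.inf' hP'ne pv with hμdef
  obtain ⟨iμ, hiμmem, hiμ⟩ := Finset.exists_mem_eq_inf' hP'ne pv
  have hμle : ∀ i ∈ P'set, μ ≤ pv i := fun i hi => Finset.inf'_le pv hi
  have hμnn : 0 ≤ μ := by rw [hμdef, hiμ]; exact hnn iμ
  set Qu : Finset (Fin n) := univ.filter (fun i : Fin n => p < (i:ℕ)+1 ∧ (i:ℕ)+1 ≤ q)
    with hQdef
  set Pi : ℝ := ∑ i ∈ Qu, pv i with hPidef
  -- upper bound for Pi
  have hPile : Pi ≤ 1 - σ + μ := by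
    have hT : ∀ i : Fin n, (i:ℕ)+2 ≤ p → σ + Pi - pv i ≤ 1 := by
      intro i hi
      have hfeasT : ¬ IsCover A b ((univ.filter (fun j : Fin n => (j:ℕ)+1 ≤ q)).erase i) := by
        apply hfeas_of
        · intro hsub
          have hmem : i ∈ MC0 := by rw [hMC0def]; simp; omega
          exact (Finset.notMem_erase i _) (hsub hmem)
        · intro i₀ h1 h2 hsub
          have hmem : i ∈ univ.filter (fun j : Fin n => (j:ℕ)+1 ≤ p ∨ j = i₀) := by
            simp only [Finset.mem_filter, Finset.mem_univ, true_and]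
            left; omega
          exact (Finset.notMem_erase i _) (hsub hmem)
      have hval := hvalf _ hfeasT
      have hsum2 : ∑ x ∈ (univ.filter (fun j : Fin n => (j:ℕ)+1 ≤ q)).erase i, pv x
          = (∑ x ∈ univ.filter (fun j : Fin n => (j:ℕ)+1 ≤ q), pv x) - pv i := by
        rw [Finset.sum_erase_eq_sub (by simp; omega)]
      have hsum3 : ∑ x ∈ univ.filter (fun j : Fin n => (j:ℕ)+1 ≤ q), pv x = σ + Pi := by
        rw [← Finset.sum_filter_add_sum_filter_not
          (univ.filter (fun j : Fin n => (j:ℕ)+1 ≤ q)) (fun j : Fin n => (j:ℕ)+1 ≤ p) pv]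
        congr 1
        · rw [hσdef, hPdef]
          apply Finset.sum_congr _ (fun _ _ => rfl)
          ext x
          simp only [Finset.mem_filter, Finset.mem_univ, true_and]
          omega
        · rw [hPidef, hQdef]
          apply Finset.sum_congr _ (fun _ _ => rfl)
          ext x
          simp only [Finset.mem_filter, Finset.mem_univ, true_and]
          omega
      rw [hsum2, hsum3] at hval
      linarith
    have h1 := hT iμ (by rw [hP'def] at hiμmem; simpa using hiμmem)
    rw [hμdef, hiμ]
    linarith
  -- J-part is at most Pi
  have hJle : ∀ ℓ : Fin n,
      ∑ i ∈ (Sl ℓ).filter (fun i : Fin n => p < (i:ℕ)+1 ∧ (i:ℕ)+1 ≤ q), pv i ≤ Pi := by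
    intro ℓ
    rw [hPidef]
    apply Finset.sum_le_sum_of_subset_of_nonneg
    · intro y hy
      rw [hQdef]
      simp only [Finset.mem_filter, Finset.mem_univ, true_and] at hy ⊢
      exact hy.2
    · exact fun i _ _ => hnn i
  -- lower bound for Pi
  have hPige : 1 - σ + μ ≤ Pi := by
    obtain ⟨ℓ₀, hℓ₀⟩ := hexists1 ip
    obtain ⟨x, hxmem⟩ := hIne ℓ₀
    have hx := hxmem
    rw [Finset.mem_sdiff, hPdef] at hx
    simp only [Finset.mem_filter, Finset.mem_univ, true_and] at hx
    have hxip : x ≠ ip := by rintro rfl; exact hx.2 hℓ₀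
    have hxP' : x ∈ P'set := by
      rw [hP'def]
      simp only [Finset.mem_filter, Finset.mem_univ, true_and]
      have := (Fin.ext_iff.not.mp hxip)
      simp only [hipdef] at this
      omega
    have hμx : μ ≤ pv x := hμle x hxP'
    have hIlb : μ ≤ ∑ i ∈ Pset \ Sl ℓ₀, pv i :=
      le_trans hμx (Finset.single_le_sum (fun i _ => hnn i) hxmem)
    have hk := hkey ℓ₀
    have := hJle ℓ₀
    linarith
  -- every I-part is at most μ
  have hIub : ∀ ℓ : Fin n, ∑ i ∈ Pset \ Sl ℓ, pv i ≤ μ := by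
    intro ℓ
    have hk := hkey ℓ
    have := hJle ℓ
    linarith
  -- sigma decomposition
  have e2 : σ = (∑ i ∈ P'set, pv i) + pv ip := by
    rw [hσdef, ← Finset.sum_filter_add_sum_filter_not Pset (fun i : Fin n => (i:ℕ)+2 ≤ p) pv]
    congr 1
    · rw [hP'def]
      apply Finset.sum_congr _ (fun _ _ => rfl)
      ext x
      rw [hPdef]
      simp only [Finset.mem_filter, Finset.mem_univ, true_and]
      omega
    · rw [show Pset.filter (fun i : Fin n => ¬((i:ℕ)+2 ≤ p)) = {ip} from by
        ext x
        rw [hPdef]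
        simp only [Finset.mem_filter, Finset.mem_univ, true_and, Finset.mem_singleton,
          Fin.ext_iff, hipdef]
        omega]
      rw [Finset.sum_singleton]
  -- the auxiliary functional is constant on tight points
  have hH : ∀ ℓ : Fin n,
      ∑ i ∈ Sl ℓ, (fun i : Fin n => if (i:ℕ)+2 ≤ p then pv i else if i = ip then μ else 0) i
        = σ - pv ip := by
    intro ℓ
    have e1 : ∑ i ∈ Sl ℓ, (if (i:ℕ)+2 ≤ p then pv i else if i = ip then μ else 0)
        = ∑ i ∈ (Sl ℓ).filter (fun i : Fin n => (i:ℕ)+2 ≤ p), pv i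
          + (if ip ∈ Sl ℓ then μ else 0) := by
      rw [← Finset.sum_filter_add_sum_filter_not (Sl ℓ) (fun i : Fin n => (i:ℕ)+2 ≤ p)]
      congr 1
      · apply Finset.sum_congr rfl
        intro i hi
        simp only [Finset.mem_filter] at hi
        rw [if_pos hi.2]
      · rw [show (∑ i ∈ (Sl ℓ).filter (fun i : Fin n => ¬((i:ℕ)+2 ≤ p)),
            (if (i:ℕ)+2 ≤ p then pv i else if i = ip then μ else 0))
            = ∑ i ∈ (Sl ℓ).filter (fun i : Fin n => ¬((i:ℕ)+2 ≤ p)),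
              (if i = ip then μ else 0) from
          Finset.sum_congr rfl (fun i hi => by
            simp only [Finset.mem_filter] at hi
            rw [if_neg hi.2])]
        rw [Finset.sum_ite_eq' _ ip (fun _ => μ)]
        have hiff : (ip ∈ (Sl ℓ).filter (fun i : Fin n => ¬((i:ℕ)+2 ≤ p))) ↔ ip ∈ Sl ℓ := by
          simp only [Finset.mem_filter]
          exact and_iff_left (by omega)
        rw [if_congr hiff rfl rfl]
    have e3 := hsplitmem (Sl ℓ) (fun i : Fin n => (i:ℕ)+2 ≤ p) (by infer_instance)
    rw [← hP'def] at e3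
    have e4 : ∑ i ∈ Pset \ Sl ℓ, pv i
        = ∑ i ∈ P'set \ Sl ℓ, pv i + (if ip ∈ Sl ℓ then 0 else pv ip) := by
      rw [← Finset.sum_filter_add_sum_filter_not (Pset \ Sl ℓ)
        (fun i : Fin n => (i:ℕ)+2 ≤ p) pv]
      congr 1
      · apply Finset.sum_congr _ (fun _ _ => rfl)
        ext x
        rw [hPdef, hP'def]
        simp only [Finset.mem_filter, Finset.mem_sdiff, Finset.mem_univ, true_and]
        constructor
        · rintro ⟨⟨h1, h2⟩, h3⟩; exact ⟨h3, h2⟩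
        · rintro ⟨h1, h2⟩; exact ⟨⟨by omega, h2⟩, h1⟩
      · by_cases hipS : ip ∈ Sl ℓ
        · rw [if_pos hipS, show (Pset \ Sl ℓ).filter (fun i : Fin n => ¬((i:ℕ)+2 ≤ p)) = ∅
            from by
            rw [Finset.eq_empty_iff_forall_notMem]
            intro x hx
            rw [hPdef] at hx
            simp only [Finset.mem_filter, Finset.mem_sdiff, Finset.mem_univ, true_and] at hx
            have hxip : x = ip := by
              apply Fin.ext
              simp only [hipdef]
              omega
            rw [hxip] at hx
            exact hx.1.2 hipS]
          rw [Finset.sum_empty]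
        · rw [if_neg hipS, show (Pset \ Sl ℓ).filter (fun i : Fin n => ¬((i:ℕ)+2 ≤ p)) = {ip}
            from by
            ext x
            rw [hPdef]
            simp only [Finset.mem_filter, Finset.mem_sdiff, Finset.mem_univ, true_and,
              Finset.mem_singleton]
            constructor
            · rintro ⟨⟨h1, h2⟩, h3⟩
              apply Fin.ext
              simp only [hipdef]
              omega
            · rintro rfl
              exact ⟨⟨by omega, hipS⟩, by omega⟩]
          rw [Finset.sum_singleton]
    simp only []
    rw [e1]
    by_cases hipS : ip ∈ Sl ℓ
    · rw [if_pos hipS]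
      rw [if_pos hipS, add_zero] at e4
      -- need: E := ∑_{P'\Sl} = μ
      obtain ⟨x, hxmem⟩ := hIne ℓ
      have hx := hxmem
      rw [Finset.mem_sdiff, hPdef] at hx
      simp only [Finset.mem_filter, Finset.mem_univ, true_and] at hx
      have hxip : x ≠ ip := by rintro rfl; exact hx.2 hipS
      have hxP' : x ∈ P'set := by
        rw [hP'def]
        simp only [Finset.mem_filter, Finset.mem_univ, true_and]
        have := (Fin.ext_iff.not.mp hxip)
        simp only [hipdef] at this
        omega
      have hxmem' : x ∈ P'set \ Sl ℓ := Finset.mem_sdiff.mpr ⟨hxP', hx.2⟩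
      have hElb : μ ≤ ∑ i ∈ P'set \ Sl ℓ, pv i :=
        le_trans (hμle x hxP') (Finset.single_le_sum (fun i _ => hnn i) hxmem')
      have hEub : ∑ i ∈ P'set \ Sl ℓ, pv i ≤ μ := by
        have := hIub ℓ
        linarith [e4]
      linarith [e2, e3]
    · rw [if_neg hipS]
      rw [if_neg hipS] at e4
      have hE0 : ∑ i ∈ P'set \ Sl ℓ, pv i = 0 := by
        rcases Finset.eq_empty_or_nonempty (P'set \ Sl ℓ) with he | ⟨x, hxmem⟩
        · rw [he, Finset.sum_empty]
        · exfalso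
          have hxP' := (Finset.mem_sdiff.mp hxmem).1
          have hElb : pv x ≤ ∑ i ∈ P'set \ Sl ℓ, pv i :=
            Finset.single_le_sum (fun i _ => hnn i) hxmem
          have := hIub ℓ
          have := hμle x hxP'
          linarith [e4]
      linarith [e2, e3]
  have hHeq := hyp _ (σ - pv ip) hH
  by_cases hc0 : σ - pv ip = 0
  · -- degenerate case: pv vanishes on [p-1]
    have hsum0 : ∑ i ∈ P'set, pv i = 0 := by linarith [e2]
    have hP'zero : ∀ i ∈ P'set, pv i = 0 :=
      (Finset.sum_eq_zero_iff_of_nonneg (fun i _ => hnn i)).mp hsum0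
    have hμ0 : μ = 0 := by rw [hμdef, hiμ]; exact hP'zero iμ hiμmem
    have hipall : ∀ ℓ : Fin n, ip ∈ Sl ℓ := by
      intro ℓ
      by_contra hnotin
      have hmem : ip ∈ Pset \ Sl ℓ :=
        Finset.mem_sdiff.mpr ⟨by rw [hPdef]; simp; omega, hnotin⟩
      have h1 : pv ip ≤ ∑ i ∈ Pset \ Sl ℓ, pv i :=
        Finset.single_le_sum (fun i _ => hnn i) hmem
      have := hIub ℓ
      rw [hμ0] at this
      linarith
    have hdelta := hyp (fun j => if j = ip then 1 else 0) 1 (fun ℓ => by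
      rw [Finset.sum_ite_eq' (Sl ℓ) ip (fun _ => (1:ℝ))]; simp [hipall ℓ])
    obtain ⟨a, b', hab, ha, hb'⟩ := hnt
    have hzero : ∀ j : Fin n, j ≠ ip → pv j = 0 := by
      intro j hj
      have := hdelta j
      simp only [if_neg hj, one_mul] at this
      linarith
    rcases eq_or_ne a ip with rfl | ha'
    · exact hb' (hzero b' (Ne.symm hab))
    · exact ha (hzero a ha')
  · -- nondegenerate case: contradiction with positive coefficient in Q
    have hPipos : 0 < Pi := by linarith
    have hjex : ∃ j ∈ Qu, pv j ≠ 0 := by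
      by_contra hz
      push_neg at hz
      have : Pi = 0 := by rw [hPidef]; exact Finset.sum_eq_zero hz
      linarith
    obtain ⟨j, hjQ, hjne⟩ := hjex
    have hj' := hHeq j
    rw [hQdef] at hjQ
    simp only [Finset.mem_filter, Finset.mem_univ, true_and] at hjQ
    have h1 : ¬((j:ℕ)+2 ≤ p) := by omega
    have h2 : j ≠ ip := by
      intro h
      have := congrArg Fin.val h
      simp only [hipdef] at this
      omega
    simp only [if_neg h1, if_neg h2] at hj'
    exact (mul_ne_zero hc0 hjne) hj'.symm
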